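/- arXiv:0709.0099 — 3 statements merged into one kernel-verified Lean document; each statement's English description precedes it below -/
import Mathlib

section
/- For any coloring of an AGW graph and any weight function w, there exists a partition of the vertex set V into F-maximal sets; in particular all parts of this partition have the same weight w*. -/
/-- A directed cycle in the multigraph `E`: a nonempty list of distinct vertices,
consecutive vertices joined by edges, and an edge from the last back to the first. -/
def IsCycle {V : Type} (E : V → Multiset V) (l : List V) : Prop :=
  ∃ h : l ≠ [], l.Nodup ∧ l.Chain' (fun a b => b ∈ E a) ∧ l.head h ∈ E (l.getLast h)

/-- An AGW graph: constant outdegree `k`, strongly connected, and the gcd of the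
lengths of all directed cycles is 1 (every common divisor of cycle lengths is 1). -/
def IsAGW {V : Type} (E : V → Multiset V) (k : ℕ) : Prop :=
  (∀ v, Multiset.card (E v) = k) ∧
  (∀ u v : V, Relation.ReflTransGen (fun a b => b ∈ E a) u v) ∧
  (∀ d : ℕ, (∀ l : List V, IsCycle E l → d ∣ l.length) → d = 1)

/-- A coloring of the multigraph: for every vertex `v` the multiset of images
`{δ a v : a ∈ Fin k}` (with multiplicity) equals `E v`. -/
def IsColoring {V : Type} [Fintype V] {k : ℕ} (E : V → Multiset V)
    (δ : Fin k → V → V) : Prop :=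
  ∀ v, Multiset.map (fun a => δ a v) (Finset.univ : Finset (Fin k)).val = E v

/-- The map `δ_s` of a word `s`: apply the letters of `s` from left to right. -/
def wordMap {V : Type} {k : ℕ} (δ : Fin k → V → V) (s : List (Fin k)) (v : V) : V :=
  s.foldl (fun x a => δ a x) v

/-- A pair of states is synchronizing if some word maps them to the same state. -/
def SyncPair {V : Type} {k : ℕ} (δ : Fin k → V → V) (p q : V) : Prop :=
  ∃ s : List (Fin k), wordMap δ s p = wordMap δ s q

/-- A pair is stable if all of its images under words are equal or synchronizing. -/
def Stable {V : Type} {k : ℕ} (δ : Fin k → V → V) (p q : V) : Prop :=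
  ∀ u : List (Fin k), SyncPair δ (wordMap δ u p) (wordMap δ u q)

/-- A word is synchronizing if it maps the whole state set to a single state. -/
def IsSynchronizingWord {V : Type} {k : ℕ} (δ : Fin k → V → V) (s : List (Fin k)) : Prop :=
  ∃ q : V, ∀ v : V, wordMap δ s v = q

/-- An F-clique: an image `V·s` of the whole state set in which every pair of
distinct states is a deadlock (not synchronizing). -/
def IsFClique {V : Type} [Fintype V] [DecidableEq V] {k : ℕ}
    (δ : Fin k → V → V) (F : Finset V) : Prop :=
  (∃ s : List (Fin k), F = Finset.image (wordMap δ s) Finset.univ) ∧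
  ∀ p ∈ F, ∀ q ∈ F, p ≠ q → ¬ SyncPair δ p q

/-- A weight function: positive and a left eigenvector of the adjacency matrix
(multiplicities of edges) with eigenvalue `k`. -/
def IsWeight {V : Type} [Fintype V] [DecidableEq V] (E : V → Multiset V) (k : ℕ)
    (w : V → ℕ) : Prop :=
  (∀ v, 1 ≤ w v) ∧ ∀ q, (∑ p, w p * (E p).count q) = k * w q

/-- The weight of a set of vertices. -/
def weight {V : Type} (w : V → ℕ) (D : Finset V) : ℕ := ∑ p ∈ D, w p

/-- `D` is mapped to a single state by some word. -/
def IsSyncSet {V : Type} [Fintype V] [DecidableEq V] {k : ℕ} (δ : Fin k → V → V)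
    (D : Finset V) : Prop :=
  ∃ s : List (Fin k), (D.image (wordMap δ s)).card = 1

/-- An F-maximal set: a set mapped to a single state by some word, of maximal weight. -/
def IsFMaximal {V : Type} [Fintype V] [DecidableEq V] {k : ℕ} (δ : Fin k → V → V)
    (w : V → ℕ) (D : Finset V) : Prop :=
  IsSyncSet δ D ∧ ∀ D' : Finset V, IsSyncSet δ D' → weight w D' ≤ weight w D

/-- `w*`: the maximal weight of a set mapped to a single state by some word. -/
noncomputable def wstar {V : Type} [Fintype V] [DecidableEq V] {k : ℕ}
    (δ : Fin k → V → V) (w : V → ℕ) : ℕ :=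
  sSup {m | ∃ D : Finset V, IsSyncSet δ D ∧ weight w D = m}

/-- A spanning subgraph: a choice of one outgoing edge of every vertex. -/
def IsSpanning {V : Type} (E : V → Multiset V) (f : V → V) : Prop :=
  ∀ v, f v ∈ E v

/-- The level of a vertex: the least `m` such that `f^[m] v` is `f`-periodic. -/
noncomputable def level {V : Type} (f : V → V) (v : V) : ℕ :=
  sInf {m | ∃ n > 0, f^[n] (f^[m] v) = f^[m] v}

/-- The root of a vertex: its image on the cycle reached along its tree. -/
noncomputable def root {V : Type} (f : V → V) (v : V) : V :=
  f^[level f v] v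

/-!
For an F-maximal set `Y` (a synchronizable set of maximal weight `w*`) and a letter `a`, the
preimages `Y·a⁻¹` have weights summing to `k · w(Y)` by the eigenvector equation; each of the `k`
summands is at most `w*`, so all equal `w*`. Hence preimages of F-maximal sets under words are
F-maximal. Now pick a word `u` maximizing the number of states `r` whose fibre `u⁻¹{r}` is
F-maximal. If a nonempty fibre `u⁻¹{r} ∋ y` were not, a word `s` sending some F-maximal set to
`y` (strong connectivity) would make `(su)⁻¹{r}` F-maximal while the F-maximal fibres of `u` stay
F-maximal under `su`, contradicting the choice of `u`. Thus the fibres of `u` are the required partition.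
-/

open Finset

section

variable {V : Type} {k : ℕ}

lemma wordMap_append (δ : Fin k → V → V) (s t : List (Fin k)) (v : V) :
    wordMap δ (s ++ t) v = wordMap δ t (wordMap δ s v) :=
  List.foldl_append ..

lemma exists_wordMap_eq_of_reflTransGen [Fintype V] {E : V → Multiset V} {δ : Fin k → V → V}
    (hδ : IsColoring E δ) {x y : V} (hxy : Relation.ReflTransGen (fun a b => b ∈ E a) x y) :
    ∃ s : List (Fin k), wordMap δ s x = y := by
  induction hxy with
  | refl => exact ⟨[], rfl⟩
  | @tail b c _ hbc ih =>
    obtain ⟨s, rfl⟩ := ih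
    rw [← hδ] at hbc
    obtain ⟨a, -, rfl⟩ := Multiset.mem_map.1 hbc
    exact ⟨s ++ [a], wordMap_append δ s [a] x⟩

variable [Fintype V] [DecidableEq V]

def wordPreimage (δ : Fin k → V → V) (s : List (Fin k)) (Y : Finset V) : Finset V :=
  univ.filter fun x => wordMap δ s x ∈ Y

section Preimages

variable {δ : Fin k → V → V}

@[simp]
lemma mem_wordPreimage {s : List (Fin k)} {Y : Finset V} {x : V} :
    x ∈ wordPreimage δ s Y ↔ wordMap δ s x ∈ Y := by
  simp [wordPreimage]

@[simp]
lemma wordPreimage_nil (Y : Finset V) : wordPreimage δ [] Y = Y := by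
  ext x; simp [wordMap]

lemma wordPreimage_append (s t : List (Fin k)) (Y : Finset V) :
    wordPreimage δ (s ++ t) Y = wordPreimage δ s (wordPreimage δ t Y) := by
  ext x; simp [wordMap_append]

lemma isSyncSet_iff {D : Finset V} :
    IsSyncSet δ D ↔ D.Nonempty ∧ ∃ s q, ∀ x ∈ D, wordMap δ s x = q := by
  simp only [IsSyncSet, card_eq_one, eq_singleton_iff_unique_mem, mem_image,
    forall_exists_index, and_imp]
  constructor
  · rintro ⟨s, q, ⟨x, hx, -⟩, h⟩
    exact ⟨⟨x, hx⟩, s, q, fun y hy => h _ y hy rfl⟩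
  · rintro ⟨⟨x, hx⟩, s, q, h⟩
    exact ⟨s, q, ⟨x, hx, h x hx⟩, fun _ y hy hyq => hyq ▸ h y hy⟩

lemma isSyncSet_singleton (v : V) : IsSyncSet δ {v} :=
  ⟨[], by simp⟩

lemma IsSyncSet.wordPreimage {Y : Finset V} (hY : IsSyncSet δ Y) (s : List (Fin k))
    (hne : (wordPreimage δ s Y).Nonempty) : IsSyncSet δ (wordPreimage δ s Y) := by
  obtain ⟨-, t, q, ht⟩ := isSyncSet_iff.1 hY
  exact isSyncSet_iff.2 ⟨hne, s ++ t, q, fun x hx => by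
    rw [wordMap_append]; exact ht _ (mem_wordPreimage.1 hx)⟩

end Preimages

lemma sum_weight_wordPreimage_letter {E : V → Multiset V} {δ : Fin k → V → V}
    (hδ : IsColoring E δ) {w : V → ℕ} (hw : ∀ q, ∑ p, w p * (E p).count q = k * w q)
    (Y : Finset V) : ∑ a, weight w (wordPreimage δ [a] Y) = k * weight w Y := by
  calc ∑ a, weight w (wordPreimage δ [a] Y)
      = ∑ q ∈ Y, ∑ p, w p * (E p).count q := by
        simp only [weight, wordPreimage, sum_filter, ← hδ _, Multiset.count_map, ← filter_val,
          ← card_def, card_filter, mul_sum, mul_ite, mul_one, mul_zero]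
        rw [sum_comm]
        conv_rhs => rw [sum_comm]; enter [2, p]; rw [sum_comm]
        simp only [wordMap, List.foldl_cons, List.foldl_nil, sum_ite_eq']
        congr!
    _ = k * weight w Y := by simp only [hw, weight, mul_sum]

section FMaximal

variable {δ : Fin k → V → V} {w : V → ℕ} {Y D : Finset V}

lemma IsFMaximal.weight_eq_wstar (hD : IsFMaximal δ w D) : weight w D = wstar δ w := by
  have : IsGreatest {m | ∃ D : Finset V, IsSyncSet δ D ∧ weight w D = m} (weight w D) :=
    ⟨⟨D, hD.1, rfl⟩, by rintro _ ⟨D', hD', rfl⟩; exact hD.2 D' hD'⟩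
  exact this.csSup_eq.symm

lemma IsFMaximal.of_superset (hY : IsFMaximal δ w Y) (hYD : Y ⊆ D) (hD : IsSyncSet δ D) :
    IsFMaximal δ w D :=
  ⟨hD, fun D' hD' => (hY.2 D' hD').trans (sum_le_sum_of_subset hYD)⟩

lemma exists_isFMaximal [Nonempty V] (δ : Fin k → V → V) (w : V → ℕ) :
    ∃ D : Finset V, IsFMaximal δ w D := by
  classical
  obtain ⟨D, hD, hmax⟩ := (univ.filter (IsSyncSet δ)).exists_max_image (weight w)
    ⟨{Classical.arbitrary V}, by simp [isSyncSet_singleton]⟩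
  exact ⟨D, (mem_filter.1 hD).2, fun D' hD' => hmax D' (by simp [hD'])⟩

variable {E : V → Multiset V} (hδ : IsColoring E δ) (hw : IsWeight E k w)
include hδ hw

lemma IsFMaximal.wordPreimage_letter (hY : IsFMaximal δ w Y) (a : Fin k) :
    IsFMaximal δ w (wordPreimage δ [a] Y) := by
  have hle : ∀ b, weight w (wordPreimage δ [b] Y) ≤ weight w Y := fun b => by
    rcases (wordPreimage δ [b] Y).eq_empty_or_nonempty with h | h
    · simp [h, weight]
    · exact hY.2 _ (hY.1.wordPreimage [b] h)
  have heq : weight w (wordPreimage δ [a] Y) = weight w Y := by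
    by_contra hne
    have := sum_lt_sum (fun b _ => hle b) ⟨a, mem_univ a, (hle a).lt_of_ne hne⟩
    simp [sum_weight_wordPreimage_letter hδ hw.2] at this
  have hpos : 0 < weight w Y := sum_pos (fun v _ => hw.1 v) (isSyncSet_iff.1 hY.1).1
  have hne : (wordPreimage δ [a] Y).Nonempty := nonempty_of_sum_ne_zero (heq ▸ hpos.ne')
  exact ⟨hY.1.wordPreimage [a] hne, fun D' hD' => heq ▸ hY.2 D' hD'⟩

lemma IsFMaximal.wordPreimage (hY : IsFMaximal δ w Y) (s : List (Fin k)) :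
    IsFMaximal δ w (wordPreimage δ s Y) := by
  induction s with
  | nil => rwa [wordPreimage_nil]
  | cons a s ih =>
    rw [← List.singleton_append, wordPreimage_append]
    exact ih.wordPreimage_letter hδ hw a

end FMaximal

section Fibres

variable (δ : Fin k → V → V) (w : V → ℕ)

open Classical in
noncomputable def targetsWithFMaximalFibre (u : List (Fin k)) : Finset V :=
  univ.filter fun r => IsFMaximal δ w (wordPreimage δ u {r})

variable {δ w}

lemma mem_targetsWithFMaximalFibre {u : List (Fin k)} {r : V} :
    r ∈ targetsWithFMaximalFibre δ w u ↔ IsFMaximal δ w (wordPreimage δ u {r}) := by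
  simp [targetsWithFMaximalFibre]

variable {E : V → Multiset V} (hδ : IsColoring E δ)
include hδ

lemma exists_mem_targetsWithFMaximalFibre_append
    (hconn : ∀ x y : V, Relation.ReflTransGen (fun a b => b ∈ E a) x y) (u : List (Fin k))
    (y : V) : ∃ s, wordMap δ u y ∈ targetsWithFMaximalFibre δ w (s ++ u) := by
  have : Nonempty V := ⟨y⟩
  obtain ⟨Y, hY⟩ := exists_isFMaximal δ w
  obtain ⟨hYne, t, q, ht⟩ := isSyncSet_iff.1 hY.1
  obtain ⟨z, hz⟩ := exists_wordMap_eq_of_reflTransGen hδ (hconn q y)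
  have hsub : Y ⊆ wordPreimage δ (t ++ z ++ u) {wordMap δ u y} := fun x hx => by
    simp [wordMap_append, ht x hx, hz]
  refine ⟨t ++ z, mem_targetsWithFMaximalFibre.2 (hY.of_superset hsub ?_)⟩
  exact (isSyncSet_singleton _).wordPreimage _ (hYne.mono hsub)

variable (hw : IsWeight E k w)
include hw

lemma targetsWithFMaximalFibre_subset_append (s u : List (Fin k)) :
    targetsWithFMaximalFibre δ w u ⊆ targetsWithFMaximalFibre δ w (s ++ u) := by
  intro r hr
  rw [mem_targetsWithFMaximalFibre, wordPreimage_append] at *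
  exact hr.wordPreimage hδ hw s

lemma isFMaximal_fibre_of_forall_card_le
    (hconn : ∀ x y : V, Relation.ReflTransGen (fun a b => b ∈ E a) x y) {u : List (Fin k)}
    (hu : ∀ u', #(targetsWithFMaximalFibre δ w u') ≤ #(targetsWithFMaximalFibre δ w u))
    (v : V) : IsFMaximal δ w (wordPreimage δ u {wordMap δ u v}) := by
  by_contra hv
  obtain ⟨s, hs⟩ := exists_mem_targetsWithFMaximalFibre_append hδ hconn u v
  have hgrow : insert (wordMap δ u v) (targetsWithFMaximalFibre δ w u) ⊆
      targetsWithFMaximalFibre δ w (s ++ u) :=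
    insert_subset hs (targetsWithFMaximalFibre_subset_append hδ hw s u)
  have := card_le_card hgrow
  rw [card_insert_of_notMem (mt mem_targetsWithFMaximalFibre.1 hv)] at this
  have := hu (s ++ u)
  omega

lemma exists_word_forall_isFMaximal_fibre
    (hconn : ∀ x y : V, Relation.ReflTransGen (fun a b => b ∈ E a) x y) :
    ∃ u : List (Fin k), ∀ v, IsFMaximal δ w (wordPreimage δ u {wordMap δ u v}) := by
  obtain ⟨_, ⟨u, rfl⟩, hu⟩ := (Set.range (targetsWithFMaximalFibre δ w)).exists_max_image card
    (Set.toFinite _) (Set.range_nonempty _)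
  exact ⟨u, isFMaximal_fibre_of_forall_card_le hδ hw hconn fun u' => hu _ ⟨u', rfl⟩⟩

end Fibres

end

theorem exists_partition_into_F_maximal_sets_general {V : Type} [Fintype V] [DecidableEq V]
    (E : V → Multiset V) (k : ℕ) (hAGW : IsAGW E k)
    (δ : Fin k → V → V) (hδ : IsColoring E δ) (w : V → ℕ) (hw : IsWeight E k w) :
    ∃ P : Finset (Finset V),
      (∀ v : V, ∃! D : Finset V, D ∈ P ∧ v ∈ D) ∧
      (∀ D ∈ P, IsFMaximal δ w D) ∧
      ∃ ws : ℕ, ∀ D ∈ P, weight w D = ws := by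
  obtain ⟨u, hu⟩ := exists_word_forall_isFMaximal_fibre hδ hw hAGW.2.1
  refine ⟨univ.image fun v => wordPreimage δ u {wordMap δ u v}, fun v => ?_, ?_, wstar δ w, ?_⟩
  · refine ⟨_, ⟨mem_image_of_mem _ (mem_univ v), by simp⟩, ?_⟩
    rintro _ ⟨hD, hvD⟩
    obtain ⟨v', -, rfl⟩ := mem_image.1 hD
    rw [mem_wordPreimage, mem_singleton] at hvD
    rw [hvD]
  · simp only [mem_image, mem_univ, true_and, forall_exists_index, forall_apply_eq_imp_iff]
    exact hu
  · simp only [mem_image, mem_univ, true_and, forall_exists_index, forall_apply_eq_imp_iff]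
    exact fun v => (hu v).weight_eq_wstar

/-- For any coloring of an AGW graph and any weight function, there is a
partition of the vertex set into F-maximal sets; all parts have the same weight `w*`. -/
theorem exists_partition_into_F_maximal_sets {V : Type} [Fintype V] [DecidableEq V]
    [Nonempty V] (E : V → Multiset V) (k : ℕ) (hAGW : IsAGW E k)
    (δ : Fin k → V → V) (hδ : IsColoring E δ) (w : V → ℕ) (hw : IsWeight E k w) :
    ∃ P : Finset (Finset V),
      (∀ v : V, ∃! D : Finset V, D ∈ P ∧ v ∈ D) ∧
      (∀ D ∈ P, IsFMaximal δ w D) ∧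
      ∃ ws : ℕ, ∀ D ∈ P, weight w D = ws :=
  exists_partition_into_F_maximal_sets_general E k hAGW δ hδ w hw
end

section
/- If in an AGW graph some vertex p has incoming bunches from two distinct vertices q and r (that is, the out-edges of q form a bunch to p and the out-edges of r form a bunch to p with q ≠ r), then every coloring of the graph has a stable pair of distinct states; indeed (q, r) is stable for every coloring. -/
/-! A bunch `q → p` means every letter sends `q` to `p`; with two bunches into `p`, every letter
sends `q` and `r` to the same state, so every nonempty word merges them. Hence `(q, r)` is
synchronized by any single letter (the alphabet is nonempty since `q` reaches `r ≠ q`), and its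
image under any word is either `(q, r)` itself or a pair of equal states. -/

theorem wordMap_cons {V : Type} {k : ℕ} (δ : Fin k → V → V) (a : Fin k) (s : List (Fin k))
    (v : V) : wordMap δ (a :: s) v = wordMap δ s (δ a v) :=
  rfl

theorem IsColoring.apply_mem {V : Type} [Fintype V] {k : ℕ} {E : V → Multiset V}
    {δ : Fin k → V → V} (hδ : IsColoring E δ) (a : Fin k) (v : V) : δ a v ∈ E v :=
  hδ v ▸ Multiset.mem_map_of_mem _ (Finset.mem_univ_val a)

theorem IsColoring.apply_eq_of_bunch {V : Type} [Fintype V] {k : ℕ} {E : V → Multiset V}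
    {δ : Fin k → V → V} (hδ : IsColoring E δ) {v p : V} (hv : E v = Multiset.replicate k p)
    (a : Fin k) : δ a v = p :=
  Multiset.eq_of_mem_replicate (hv ▸ hδ.apply_mem a v)

section MergedByEveryLetter

variable {V : Type} {k : ℕ} {δ : Fin k → V → V} {q r : V}

theorem wordMap_eq_of_forall_letter (hmerge : ∀ a, δ a q = δ a r) :
    ∀ {u : List (Fin k)}, u ≠ [] → wordMap δ u q = wordMap δ u r
  | a :: s, _ => by rw [wordMap_cons, wordMap_cons, hmerge]

theorem syncPair_of_forall_letter (hk : 0 < k) (hmerge : ∀ a, δ a q = δ a r) :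
    SyncPair δ q r :=
  ⟨[⟨0, hk⟩], wordMap_eq_of_forall_letter hmerge (List.cons_ne_nil _ _)⟩

theorem stable_of_forall_letter (hk : 0 < k) (hmerge : ∀ a, δ a q = δ a r) :
    Stable δ q r := by
  intro u
  rcases eq_or_ne u [] with rfl | hu
  · exact syncPair_of_forall_letter hk hmerge
  · exact ⟨[], wordMap_eq_of_forall_letter hmerge hu⟩

end MergedByEveryLetter

theorem two_bunches_stable_general {V : Type} [Fintype V]
    (E : V → Multiset V) (k : ℕ) (hAGW : IsAGW E k)
    (p q r : V) (hqr : q ≠ r)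
    (hq : E q = Multiset.replicate k p) (hr : E r = Multiset.replicate k p) :
    ∀ δ : Fin k → V → V, IsColoring E δ → SyncPair δ q r ∧ Stable δ q r := by
  intro δ hδ
  have hk : 0 < k := by
    obtain rfl | ⟨c, hc, -⟩ := (hAGW.2.1 q r).cases_head
    · exact absurd rfl hqr
    · rw [hq, Multiset.mem_replicate] at hc
      exact Nat.pos_of_ne_zero hc.1
  have hmerge : ∀ a, δ a q = δ a r := fun a => by
    rw [hδ.apply_eq_of_bunch hq, hδ.apply_eq_of_bunch hr]
  exact ⟨syncPair_of_forall_letter hk hmerge, stable_of_forall_letter hk hmerge⟩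

/-- If a vertex `p` has incoming bunches from two distinct vertices `q`
and `r`, then for every coloring the pair `(q, r)` is a stable pair of distinct states. -/
theorem two_bunches_stable {V : Type} [Fintype V] [DecidableEq V] [Nonempty V]
    (E : V → Multiset V) (k : ℕ) (hAGW : IsAGW E k)
    (p q r : V) (hqr : q ≠ r)
    (hq : E q = Multiset.replicate k p) (hr : E r = Multiset.replicate k p) :
    ∀ δ : Fin k → V → V, IsColoring E δ → SyncPair δ q r ∧ Stable δ q r :=
  two_bunches_stable_general E k hAGW p q r hqr hq hr
end

section
/- If in an AGW graph with at least two vertices no vertex has incoming bunches from two distinct vertices (there are no distinct q, r whose out-edges both form a bunch to one common vertex p), then the graph has a spanning subgraph f whose maximal level L is positive and such that all vertices of level L lie in one tree of f (they all have the same root). -/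
/-!
Choose a spanning subgraph `f` with the largest number of cyclic vertices and, among those, the
largest maximal level `L`. If `L = 0`, `f` is a union of cycles; it cannot contain every edge
(the graph would then be a single cycle of length at least 2, against the gcd condition), and
redirecting the edge of `f` at some vertex along another of its edges gives the subgraph sought.

If `L > 0`, suppose no spanning subgraph has all its deepest vertices in one tree. Let `p` have
level `L` and root `r`, and let `w → p` be an edge. Redirecting the edge of `w` to `p` and using
the optimality of `f` shows that `w` is the vertex `L + 1` steps before `r` on its cycle;
redirecting the edge of `f^[L - 1] p` shows that all its edges go to `r`. The subgraph with `w`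
redirected to `p` is again optimal, with deepest vertex `f w` of root `r` and `f^[L] w` just
below `r`, so all edges of `f^[L] w` go to `r` as well: two distinct vertices with bunches to `r`.
-/

open Function Set

namespace Function

variable {α : Type*} {f : α → α} {x y : α} {n : ℕ}

theorem iterate_mem_periodicPts (hx : x ∈ periodicPts f) (n : ℕ) : f^[n] x ∈ periodicPts f :=
  (bijOn_periodicPts f).mapsTo.iterate n hx

theorem iterate_ne_of_mem_periodicPts_of_notMem (hx : x ∈ periodicPts f)
    (hy : y ∉ periodicPts f) (n : ℕ) : f^[n] x ≠ y := fun h =>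
  hy (h ▸ iterate_mem_periodicPts hx n)

theorem exists_iterate_eq_of_mem_periodicPts (hy : y ∈ periodicPts f) (h : f^[n] y = x) :
    ∃ m, f^[m] x = y := by
  have hpos := minimalPeriod_pos_of_mem_periodicPts hy
  refine ⟨minimalPeriod f y * (n + 1) - n, ?_⟩
  rw [← h, ← iterate_add_apply, Nat.sub_add_cancel (by nlinarith)]
  exact (isPeriodicPt_minimalPeriod f y).mul_const (n + 1)

theorem exists_iterate_mem_periodicPts [Finite α] (f : α → α) (x : α) :
    ∃ n, f^[n] x ∈ periodicPts f := by
  obtain ⟨i, j, hij, he⟩ := Finite.exists_ne_map_eq_of_infinite (f^[·] x)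
  wlog h : i < j generalizing i j
  · exact this j i hij.symm he.symm (by omega)
  refine ⟨i, mk_mem_periodicPts (n := j - i) (by omega) ?_⟩
  change f^[j - i] (f^[i] x) = f^[i] x
  rw [← iterate_add_apply, Nat.sub_add_cancel h.le]
  exact he.symm

theorem range_iterate_eq_image_Iio (hx : x ∈ periodicPts f) :
    range (f^[·] x) = (f^[·] x) '' Iio (minimalPeriod f x) := by
  refine (image_subset_range _ _).antisymm' ?_
  rintro _ ⟨n, rfl⟩
  exact ⟨n % minimalPeriod f x, Nat.mod_lt _ (minimalPeriod_pos_of_mem_periodicPts hx),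
    iterate_mod_minimalPeriod_eq⟩

theorem ncard_range_iterate (hx : x ∈ periodicPts f) :
    (range (f^[·] x)).ncard = minimalPeriod f x := by
  rw [range_iterate_eq_image_Iio hx, iterate_injOn_Iio_minimalPeriod.ncard_image,
    ncard_Iio_nat]

theorem range_iterate_iterate (hx : x ∈ periodicPts f) (n : ℕ) :
    range (f^[·] (f^[n] x)) = range (f^[·] x) := by
  refine Subset.antisymm ?_ ?_
  · rintro _ ⟨m, rfl⟩
    exact ⟨m + n, (iterate_add_apply f m n x)⟩
  · rintro _ ⟨m, rfl⟩
    obtain ⟨k, hk⟩ := exists_iterate_eq_of_mem_periodicPts hx (n := n) rfl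
    exact ⟨m + k, by simp only [iterate_add_apply, hk]⟩

end Function

section Level

variable {V : Type} {f : V → V} {v : V} {n : ℕ}

theorem level_le_of_iterate_mem (h : f^[n] v ∈ periodicPts f) : level f v ≤ n :=
  Nat.sInf_le h

theorem iterate_add_level (f : V → V) (v : V) (n : ℕ) :
    f^[n + level f v] v = f^[n] (root f v) :=
  iterate_add_apply f n _ v

variable [Finite V]

theorem iterate_level_mem_periodicPts (f : V → V) (v : V) :
    f^[level f v] v ∈ periodicPts f :=
  Nat.sInf_mem (exists_iterate_mem_periodicPts f v)

theorem root_mem_periodicPts (f : V → V) (v : V) : root f v ∈ periodicPts f :=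
  iterate_level_mem_periodicPts f v

theorem iterate_mem_periodicPts_iff : f^[n] v ∈ periodicPts f ↔ level f v ≤ n := by
  refine ⟨level_le_of_iterate_mem, fun h => ?_⟩
  rw [← Nat.sub_add_cancel h, iterate_add_apply]
  exact iterate_mem_periodicPts (iterate_level_mem_periodicPts f v) _

theorem level_eq_zero_iff : level f v = 0 ↔ v ∈ periodicPts f := by
  rw [← nonpos_iff_eq_zero, ← iterate_mem_periodicPts_iff, iterate_zero_apply]

theorem level_eq_of_iterate_mem (h : ∀ i < n, f^[i] v ∉ periodicPts f)
    (hn : f^[n] v ∈ periodicPts f) : level f v = n :=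
  (level_le_of_iterate_mem hn).antisymm <| not_lt.1 fun hlt =>
    h _ hlt (iterate_level_mem_periodicPts f v)

theorem level_iterate (f : V → V) (v : V) (n : ℕ) :
    level f (f^[n] v) = level f v - n := by
  refine le_antisymm (level_le_of_iterate_mem ?_) (Nat.sub_le_of_le_add ?_)
  · rw [← iterate_add_apply, iterate_mem_periodicPts_iff]
    omega
  · rw [← iterate_mem_periodicPts_iff, iterate_add_apply]
    exact iterate_level_mem_periodicPts f _

theorem root_iterate (h : n ≤ level f v) : root f (f^[n] v) = root f v := by
  rw [root, root, level_iterate, ← iterate_add_apply, Nat.sub_add_cancel h]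

end Level

section Update

variable {V : Type} [DecidableEq V] {f : V → V} {w x y z : V} {n s : ℕ}

theorem iterate_update_of_forall_lt_ne (h : ∀ i < n, f^[i] x ≠ w) :
    (update f w z)^[n] x = f^[n] x := by
  induction n with
  | zero => rfl
  | succ n ih =>
    rw [iterate_succ_apply', iterate_succ_apply', ih fun i hi => h i (by omega),
      update_of_ne (h n n.lt_succ_self)]

theorem iterate_update_of_forall_ne (h : ∀ i, f^[i] x ≠ w) (n : ℕ) :
    (update f w z)^[n] x = f^[n] x :=
  iterate_update_of_forall_lt_ne fun i _ => h i

theorem exists_iterate_update_eq (h : ∃ n, f^[n] x = w) : ∃ n, (update f w z)^[n] x = w := by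
  classical
  refine ⟨Nat.find h, ?_⟩
  rw [iterate_update_of_forall_lt_ne fun i hi => Nat.find_min h hi]
  exact Nat.find_spec h

theorem mem_periodicPts_update_iff (h : ∀ i, f^[i] x ≠ w) :
    x ∈ periodicPts (update f w z) ↔ x ∈ periodicPts f := by
  simp only [mem_periodicPts, IsPeriodicPt, IsFixedPt, iterate_update_of_forall_ne h]

theorem mem_periodicPts_of_mem_update (hx : x ∈ periodicPts (update f w z))
    (h : ∀ i, (update f w z)^[i] x ≠ w) : x ∈ periodicPts f ∧ ∀ i, f^[i] x ≠ w := by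
  have hf : ∀ i, f^[i] x ≠ w := fun i he => by
    obtain ⟨n, hn⟩ := exists_iterate_update_eq (z := z) ⟨i, he⟩
    exact h n hn
  exact ⟨(mem_periodicPts_update_iff hf).1 hx, hf⟩

theorem mem_periodicPts_update_of_notMem_range (hx : x ∈ periodicPts f)
    (hxw : x ∉ range (f^[·] w)) : x ∈ periodicPts (update f w z) :=
  (mem_periodicPts_update_iff fun _ he => hxw (exists_iterate_eq_of_mem_periodicPts hx he)).2 hx

theorem periodicPts_subset_update (hw : w ∉ periodicPts f) :
    periodicPts f ⊆ periodicPts (update f w z) := fun _ hx =>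
  (mem_periodicPts_update_iff (iterate_ne_of_mem_periodicPts_of_notMem hx hw)).2 hx

theorem notMem_periodicPts_update_self (hz : ∀ i, f^[i] z ≠ w) :
    w ∉ periodicPts (update f w z) := by
  rintro ⟨n, hn, hw⟩
  apply hz (n - 1)
  have : (update f w z)^[n - 1 + 1] w = w := by rwa [Nat.sub_add_cancel hn]
  rwa [iterate_succ_apply, update_self, iterate_update_of_forall_ne hz] at this

theorem mem_periodicPts_update_self (hz : ∃ n, f^[n] z = w) :
    w ∈ periodicPts (update f w z) := by
  obtain ⟨n, hn⟩ := exists_iterate_update_eq hz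
  refine mk_mem_periodicPts n.succ_pos ?_
  rw [IsPeriodicPt, IsFixedPt, iterate_succ_apply, update_self, hn]

theorem periodicPts_ssubset_update (hw : w ∉ periodicPts f) (hz : ∃ n, f^[n] z = w) :
    periodicPts f ⊂ periodicPts (update f w z) :=
  (ssubset_iff_of_subset (periodicPts_subset_update hw)).2
    ⟨w, mem_periodicPts_update_self hz, hw⟩

theorem periodicPts_update_of_forall_ne (hw : w ∉ periodicPts f) (hz : ∀ i, f^[i] z ≠ w) :
    periodicPts (update f w z) = periodicPts f := by
  refine (periodicPts_subset_update hw).antisymm' fun x hx => ?_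
  exact (mem_periodicPts_of_mem_update hx
    (iterate_ne_of_mem_periodicPts_of_notMem hx (notMem_periodicPts_update_self hz))).1

theorem periodicPts_update_of_iterate_eq (hw : w ∈ periodicPts f) (hs : f^[s] z = w)
    (hfirst : ∀ i < s, f^[i] z ≠ w) :
    periodicPts (update f w z) = (periodicPts f \ range (f^[·] w)) ∪ (f^[·] z) '' Iic s := by
  have hiter : ∀ i ≤ s, (update f w z)^[i] z = f^[i] z := fun i hi =>
    iterate_update_of_forall_lt_ne fun j hj => hfirst j (by omega)
  have hmaps : MapsTo (update f w z) ((f^[·] z) '' Iic s) ((f^[·] z) '' Iic s) := by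
    rintro _ ⟨i, hi, rfl⟩
    rcases (mem_Iic.1 hi).lt_or_eq with hi | rfl
    · refine ⟨i + 1, mem_Iic.2 hi, ?_⟩
      change f^[i + 1] z = update f w z (f^[i] z)
      rw [iterate_succ_apply', update_of_ne (hfirst i hi)]
    · refine ⟨0, mem_Iic.2 (Nat.zero_le i), ?_⟩
      change z = update f w z (f^[i] z)
      rw [hs, update_self]
  have hz : z ∈ periodicPts (update f w z) := mk_mem_periodicPts s.succ_pos <| by
    rw [IsPeriodicPt, IsFixedPt, iterate_succ_apply', hiter s le_rfl, hs, update_self]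
  ext x
  constructor
  · intro hx
    by_cases hhit : ∃ i, (update f w z)^[i] x = w
    · obtain ⟨i, hi⟩ := hhit
      obtain ⟨j, rfl⟩ := exists_iterate_eq_of_mem_periodicPts hx hi
      exact Or.inr (hmaps.iterate j ⟨s, mem_Iic.2 le_rfl, hs⟩)
    · push Not at hhit
      obtain ⟨hxf, hxw⟩ := mem_periodicPts_of_mem_update hx hhit
      refine Or.inl ⟨hxf, ?_⟩
      rintro ⟨j, rfl⟩
      obtain ⟨i, hi⟩ := exists_iterate_eq_of_mem_periodicPts hw (n := j) rfl
      exact hxw i hi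
  · rintro (⟨hxf, hxw⟩ | ⟨i, hi, rfl⟩)
    · exact mem_periodicPts_update_of_notMem_range hxf hxw
    · change f^[i] z ∈ _
      rw [← hiter i hi]
      exact iterate_mem_periodicPts hz i

theorem level_update_of_forall_ne (h : ∀ i, f^[i] x ≠ w) :
    level (update f w z) x = level f x := by
  unfold level
  congr 1
  ext m
  change _ ∈ periodicPts _ ↔ _ ∈ periodicPts _
  rw [iterate_update_of_forall_ne h]
  exact mem_periodicPts_update_iff fun i => by rw [← iterate_add_apply]; exact h _

theorem root_update_of_forall_ne (h : ∀ i, f^[i] x ≠ w) :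
    root (update f w z) x = root f x := by
  rw [root, root, level_update_of_forall_ne h, iterate_update_of_forall_ne h]

variable [Finite V]

theorem level_update_self (hz : ∀ i, f^[i] z ≠ w) :
    level (update f w z) w = level f z + 1 := by
  have h1 := level_iterate (update f w z) w 1
  have h2 := mt level_eq_zero_iff.1 (notMem_periodicPts_update_self hz)
  rw [iterate_one, update_self, level_update_of_forall_ne hz] at h1
  omega

theorem root_update_of_exists_iterate_eq (hz : ∀ i, f^[i] z ≠ w) (hy : ∃ n, f^[n] y = w) :
    root (update f w z) y = root f z := by
  obtain ⟨n, hn⟩ := exists_iterate_update_eq (z := z) hy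
  have hlt : n < level (update f w z) y := by
    rw [← not_le, ← iterate_mem_periodicPts_iff, hn]
    exact notMem_periodicPts_update_self hz
  have hw : 1 ≤ level (update f w z) w := by rw [level_update_self hz]; omega
  rw [← root_iterate hlt.le, hn, ← root_iterate hw, iterate_one, update_self,
    root_update_of_forall_ne hz]

end Update

def MaxLevelInOneTree {V : Type} (f : V → V) : Prop :=
  ∃ L : ℕ, 0 < L ∧ (∀ v : V, level f v ≤ L) ∧ (∃ v : V, level f v = L) ∧
    ∀ u v : V, level f u = L → level f v = L → root f u = root f v

theorem maxLevelInOneTree_of_root_eq {V : Type} [Fintype V] {f : V → V} {L : ℕ} {r : V}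
    (hbig : ∃ v, L < level f v) (hroot : ∀ v, L < level f v → root f v = r) :
    MaxLevelInOneTree f := by
  obtain ⟨v, hv⟩ := hbig
  obtain ⟨u, -, hu⟩ := Finset.exists_max_image Finset.univ (level f) ⟨v, Finset.mem_univ v⟩
  have hvu := hu v (Finset.mem_univ v)
  refine ⟨level f u, by omega, fun y => hu y (Finset.mem_univ y), ⟨u, rfl⟩, ?_⟩
  intro a b ha hb
  rw [hroot a (by omega), hroot b (by omega)]

section OffCycle

variable {V : Type} [DecidableEq V] {f : V → V} {p w x : V} {L : ℕ}

theorem exists_root_update_eq_root_iterate [Finite V] (hmax : ∀ x, level f x ≤ L)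
    (hw : w ∈ periodicPts f) (hx : L < level (update f w p) x) :
    ∃ j, f^[j] w ∉ periodicPts (update f w p) ∧
      root (update f w p) x = root (update f w p) (f^[j] w) := by
  have hℓ : level f x < level (update f w p) x := (hmax x).trans_lt hx
  have hgx : (update f w p)^[level f x] x = f^[level f x] x :=
    iterate_update_of_forall_lt_ne fun i hi he =>
      (not_le.2 hi) (iterate_mem_periodicPts_iff.1 (he ▸ hw))
  have hy : f^[level f x] x ∉ periodicPts (update f w p) := by
    rw [← hgx, iterate_mem_periodicPts_iff]
    exact not_le.2 hℓ
  obtain ⟨j, hj⟩ : f^[level f x] x ∈ range (f^[·] w) := by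
    by_contra h
    exact hy (mem_periodicPts_update_of_notMem_range (iterate_level_mem_periodicPts f x) h)
  refine ⟨j, fun h => hy (hj ▸ h), ?_⟩
  change f^[j] w = _ at hj
  rw [hj, ← hgx, root_iterate hℓ.le]

theorem maxLevelInOneTree_update_of_forall_ne [Fintype V] (hmax : ∀ x, level f x ≤ level f p)
    (hw : w ∈ periodicPts f) (hp : ∀ i, f^[i] p ≠ w) : MaxLevelInOneTree (update f w p) := by
  refine maxLevelInOneTree_of_root_eq (L := level f p) (r := root f p)
    ⟨w, by rw [level_update_self hp]; omega⟩ fun x hx => ?_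
  obtain ⟨j, -, hj⟩ := exists_root_update_eq_root_iterate hmax hw hx
  rw [hj, root_update_of_exists_iterate_eq hp (exists_iterate_eq_of_mem_periodicPts hw rfl)]

end OffCycle

section OnCycle

variable {V : Type} {f : V → V} {p w x : V} {d : ℕ}

theorem injOn_iterate_Iio_level_add_minimalPeriod [Finite V] (f : V → V) (p : V) :
    InjOn (f^[·] p) (Iio (level f p + minimalPeriod f (root f p))) := by
  intro i hi j hj (he : f^[i] p = f^[j] p)
  have hl := congrArg (level f) he
  rw [level_iterate, level_iterate] at hl
  by_cases h : level f p ≤ i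
  · have hj' : level f p ≤ j := by omega
    have key : f^[i - level f p] (root f p) = f^[j - level f p] (root f p) := by
      rwa [root, ← iterate_add_apply, ← iterate_add_apply, Nat.sub_add_cancel h,
        Nat.sub_add_cancel hj']
    have := iterate_injOn_Iio_minimalPeriod (mem_Iio.2 (show i - level f p < _ by
      simp only [mem_Iio] at hi; omega)) (mem_Iio.2 (show j - level f p < _ by
      simp only [mem_Iio] at hj; omega)) key
    omega
  · omega

theorem exists_lt_minimalPeriod_iterate_root_eq [Finite V] {i : ℕ} (hw : w ∈ periodicPts f)
    (h : f^[i] p = w) : ∃ d < minimalPeriod f (root f p), f^[d] (root f p) = w := by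
  have hi : level f p ≤ i := iterate_mem_periodicPts_iff.1 (h ▸ hw)
  refine ⟨(i - level f p) % minimalPeriod f (root f p),
    Nat.mod_lt _ (minimalPeriod_pos_of_mem_periodicPts (root_mem_periodicPts f p)), ?_⟩
  rw [iterate_mod_minimalPeriod_eq, ← iterate_add_level, Nat.sub_add_cancel hi, h]

theorem periodicPts_update_of_iterate_root_eq [Finite V] [DecidableEq V]
    (hd : f^[d] (root f p) = w) (hdm : d < minimalPeriod f (root f p)) :
    periodicPts (update f w p) =
      (periodicPts f \ range (f^[·] (root f p))) ∪ (f^[·] p) '' Iic (level f p + d) := by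
  have hinj := injOn_iterate_Iio_level_add_minimalPeriod f p
  have hs : f^[level f p + d] p = w := by rw [add_comm, iterate_add_level, hd]
  rw [periodicPts_update_of_iterate_eq (hd ▸ iterate_mem_periodicPts (root_mem_periodicPts f p) d)
    hs fun i hi he => ?_, ← hd, range_iterate_iterate (root_mem_periodicPts f p)]
  have := hinj (mem_Iio.2 (by omega)) (mem_Iio.2 (by omega)) (he.trans hs.symm)
  omega

theorem iterate_root_mem_periodicPts_update_iff [Finite V] [DecidableEq V]
    (hd : f^[d] (root f p) = w) (hdm : d < minimalPeriod f (root f p)) {j : ℕ}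
    (hj : j < minimalPeriod f (root f p)) :
    f^[j] (root f p) ∈ periodicPts (update f w p) ↔ j ≤ d := by
  rw [periodicPts_update_of_iterate_root_eq hd hdm]
  simp only [mem_union, mem_sdiff, mem_range, exists_apply_eq_apply, not_true_eq_false,
    and_false, false_or, mem_image, mem_Iic]
  constructor
  · rintro ⟨i, hi, he⟩
    rw [← iterate_add_level] at he
    have := injOn_iterate_Iio_level_add_minimalPeriod f p (mem_Iio.2 (by omega))
      (mem_Iio.2 (by omega)) he
    omega
  · intro h
    exact ⟨j + level f p, by omega, iterate_add_level f p j⟩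

theorem iterate_update_iterate_root [DecidableEq V] (hd : f^[d] (root f p) = w) {i j : ℕ}
    (hdj : d < j) (hij : i + j ≤ minimalPeriod f (root f p)) :
    (update f w p)^[i] (f^[j] (root f p)) = f^[i + j] (root f p) := by
  rw [iterate_add_apply]
  refine iterate_update_of_forall_lt_ne fun k hk he => ?_
  rw [← iterate_add_apply, ← hd] at he
  have := iterate_injOn_Iio_minimalPeriod (mem_Iio.2 (show k + j < _ by omega))
    (mem_Iio.2 (show d < _ by omega)) he
  omega

theorem level_root_update_iterate_root [Finite V] [DecidableEq V]
    (hd : f^[d] (root f p) = w) (hdm : d < minimalPeriod f (root f p)) {j : ℕ} (hdj : d < j)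
    (hj : j < minimalPeriod f (root f p)) :
    level (update f w p) (f^[j] (root f p)) = minimalPeriod f (root f p) - j ∧
      root (update f w p) (f^[j] (root f p)) = root f p := by
  have hend : (update f w p)^[minimalPeriod f (root f p) - j] (f^[j] (root f p)) = root f p := by
    rw [iterate_update_iterate_root hd hdj (by omega), Nat.sub_add_cancel hj.le,
      iterate_minimalPeriod]
  have hlevel : level (update f w p) (f^[j] (root f p)) = minimalPeriod f (root f p) - j := by
    refine level_eq_of_iterate_mem (fun i hi => ?_) ?_
    · rw [iterate_update_iterate_root hd hdj (by omega),
        iterate_root_mem_periodicPts_update_iff hd hdm (by omega)]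
      omega
    · rw [hend, ← iterate_zero_apply f (root f p),
        iterate_root_mem_periodicPts_update_iff hd hdm (by omega)]
      omega
  exact ⟨hlevel, by rw [root, hlevel, hend]⟩

theorem root_update_of_lt_level_of_iterate_root_eq [Finite V] [DecidableEq V]
    (hmax : ∀ x, level f x ≤ level f p) (hd : f^[d] (root f p) = w)
    (hdm : d < minimalPeriod f (root f p))
    (hx : level f p < level (update f w p) x) : root (update f w p) x = root f p := by
  have hm := minimalPeriod_pos_of_mem_periodicPts (root_mem_periodicPts f p)
  obtain ⟨j, hj, hroot⟩ := exists_root_update_eq_root_iterate hmax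
    (hd ▸ iterate_mem_periodicPts (root_mem_periodicPts f p) d) hx
  have hjd : f^[j] w = f^[(j + d) % minimalPeriod f (root f p)] (root f p) := by
    rw [iterate_mod_minimalPeriod_eq, iterate_add_apply, hd]
  rw [hjd, iterate_root_mem_periodicPts_update_iff hd hdm (Nat.mod_lt _ hm)] at hj
  rw [hroot, hjd, (level_root_update_iterate_root hd hdm (not_le.1 hj) (Nat.mod_lt _ hm)).2]

theorem ncard_periodicPts_update_add [Finite V] [DecidableEq V]
    (hd : f^[d] (root f p) = w) (hdm : d < minimalPeriod f (root f p)) :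
    (periodicPts (update f w p)).ncard + minimalPeriod f (root f p) =
      (periodicPts f).ncard + (level f p + d + 1) := by
  have hsub : range (f^[·] (root f p)) ⊆ periodicPts f := by
    rintro _ ⟨j, rfl⟩
    exact iterate_mem_periodicPts (root_mem_periodicPts f p) j
  have hdisj : Disjoint (periodicPts f \ range (f^[·] (root f p)))
      ((f^[·] p) '' Iic (level f p + d)) := by
    rw [disjoint_right]
    rintro _ ⟨i, -, rfl⟩ ⟨hP, hR⟩
    have hi := iterate_mem_periodicPts_iff.1 hP
    refine hR ⟨i - level f p, ?_⟩
    change f^[i - level f p] (root f p) = f^[i] p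
    rw [← iterate_add_level, Nat.sub_add_cancel hi]
  have hinj : InjOn (f^[·] p) (Iic (level f p + d)) :=
    (injOn_iterate_Iio_level_add_minimalPeriod f p).mono fun i hi => by
      simp only [mem_Iic, mem_Iio] at hi ⊢; omega
  have hle := ncard_le_ncard hsub
  rw [periodicPts_update_of_iterate_root_eq hd hdm, ncard_union_eq hdisj, ncard_sdiff hsub,
    hinj.ncard_image, ncard_Iic_nat, ncard_range_iterate (root_mem_periodicPts f p)] at *
  omega

theorem maxLevelInOneTree_update_of_iterate_root_eq [Fintype V] [DecidableEq V]
    (hmax : ∀ x, level f x ≤ level f p)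
    (hd : f^[d] (root f p) = w) (hlong : level f p + d + 1 < minimalPeriod f (root f p)) :
    MaxLevelInOneTree (update f w p) := by
  refine maxLevelInOneTree_of_root_eq (L := level f p) (r := root f p)
    ⟨f^[d + 1] (root f p), ?_⟩ fun _ hx =>
      root_update_of_lt_level_of_iterate_root_eq hmax hd (by omega) hx
  rw [(level_root_update_iterate_root hd (by omega) (Nat.lt_succ_self d) (by omega)).1]
  omega

end OnCycle

theorem IsSpanning.update {V : Type} [DecidableEq V] {E : V → Multiset V} {f : V → V}
    {w z : V} (hf : IsSpanning E f) (hz : z ∈ E w) : IsSpanning E (update f w z) := by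
  intro v
  rcases eq_or_ne v w with rfl | h
  · rwa [update_self]
  · rw [update_of_ne h]
    exact hf v

section Optimal

variable {V : Type} [Fintype V] {E : V → Multiset V} {f g : V → V} {p w z : V}

noncomputable def maxLevel (f : V → V) : ℕ := Finset.univ.sup (level f)

theorem level_le_maxLevel (f : V → V) (v : V) : level f v ≤ maxLevel f :=
  Finset.le_sup (Finset.mem_univ v)

theorem exists_level_eq_maxLevel [Nonempty V] (f : V → V) : ∃ v, level f v = maxLevel f := by
  obtain ⟨v, -, hv⟩ := Finset.exists_mem_eq_sup Finset.univ Finset.univ_nonempty (level f)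
  exact ⟨v, hv.symm⟩

noncomputable def potential (f : V → V) : ℕ ×ₗ ℕ :=
  toLex ((periodicPts f).ncard, maxLevel f)

def IsOptimal (E : V → Multiset V) (f : V → V) : Prop :=
  IsSpanning E f ∧ ∀ g, IsSpanning E g → potential g ≤ potential f

theorem exists_isOptimal (h : ∃ f, IsSpanning E f) : ∃ f, IsOptimal E f := by
  classical
  obtain ⟨f₀, hf₀⟩ := h
  obtain ⟨f, hf, hmax⟩ := Finset.exists_max_image (Finset.univ.filter (IsSpanning E)) potential
    ⟨f₀, Finset.mem_filter.2 ⟨Finset.mem_univ _, hf₀⟩⟩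
  exact ⟨f, (Finset.mem_filter.1 hf).2, fun g hg =>
    hmax g (Finset.mem_filter.2 ⟨Finset.mem_univ _, hg⟩)⟩

namespace IsOptimal

theorem ncard_le (hf : IsOptimal E f) (hg : IsSpanning E g) :
    (periodicPts g).ncard ≤ (periodicPts f).ncard := by
  have := hf.2 g hg
  rw [potential, potential, Prod.Lex.toLex_le_toLex] at this
  omega

theorem maxLevel_le (hf : IsOptimal E f) (hg : IsSpanning E g)
    (h : (periodicPts g).ncard = (periodicPts f).ncard) : maxLevel g ≤ maxLevel f := by
  have := hf.2 g hg
  rw [potential, potential, Prod.Lex.toLex_le_toLex] at this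
  omega

theorem of_le (hf : IsOptimal E f) (hg : IsSpanning E g)
    (h : (periodicPts g).ncard = (periodicPts f).ncard) (hL : maxLevel f ≤ maxLevel g) :
    IsOptimal E g := by
  refine ⟨hg, fun g' hg' => (hf.2 g' hg').trans ?_⟩
  rw [potential, potential, Prod.Lex.toLex_le_toLex]
  omega

variable [DecidableEq V]

theorem exists_iterate_root_eq (hf : IsOptimal E f)
    (hbad : ∀ g, IsSpanning E g → ¬ MaxLevelInOneTree g) (hp : level f p = maxLevel f)
    (hwp : p ∈ E w) :
    ∃ d, f^[d] (root f p) = w ∧ level f p + d + 1 = minimalPeriod f (root f p) := by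
  have hmax : ∀ x, level f x ≤ level f p := fun x => hp ▸ level_le_maxLevel f x
  have hg := hf.1.update hwp
  by_cases hhit : ∃ i, f^[i] p = w
  · by_cases hw : w ∈ periodicPts f
    · obtain ⟨i, hi⟩ := hhit
      obtain ⟨d, hdm, hd⟩ := exists_lt_minimalPeriod_iterate_root_eq hw hi
      have hcard := ncard_periodicPts_update_add hd hdm
      have hle := hf.ncard_le hg
      refine ⟨d, hd, le_antisymm (by omega) (not_lt.1 fun h => hbad _ hg ?_)⟩
      exact maxLevelInOneTree_update_of_iterate_root_eq hmax hd h
    · exact absurd (hf.ncard_le hg)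
        (not_le.2 (ncard_lt_ncard (periodicPts_ssubset_update hw hhit)))
  · push Not at hhit
    by_cases hw : w ∈ periodicPts f
    · exact absurd (maxLevelInOneTree_update_of_forall_ne hmax hw hhit) (hbad _ hg)
    · have hle := hf.maxLevel_le hg (by rw [periodicPts_update_of_forall_ne hw hhit])
      have hw' := level_le_maxLevel (update f w p) w
      rw [level_update_self hhit] at hw'
      omega

theorem mem_periodicPts_and_iterate_eq_root (hf : IsOptimal E f)
    (hbad : ∀ g, IsSpanning E g → ¬ MaxLevelInOneTree g) (hp : level f p = maxLevel f)
    (hwp : p ∈ E w) : w ∈ periodicPts f ∧ f^[level f p + 1] w = root f p := by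
  obtain ⟨d, hd, hdm⟩ := hf.exists_iterate_root_eq hbad hp hwp
  refine ⟨hd ▸ iterate_mem_periodicPts (root_mem_periodicPts f p) d, ?_⟩
  rw [← hd, ← iterate_add_apply, add_right_comm, hdm, iterate_minimalPeriod]

theorem eq_root_of_mem (hf : IsOptimal E f)
    (hbad : ∀ g, IsSpanning E g → ¬ MaxLevelInOneTree g) (hp : level f p = maxLevel f)
    (hL : 0 < maxLevel f) (hwp : p ∈ E w) (hz : z ∈ E (f^[maxLevel f - 1] p)) :
    z = root f p := by
  set L := maxLevel f
  set u := f^[L - 1] p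
  have hu : u ∉ periodicPts f := by rw [iterate_mem_periodicPts_iff]; omega
  have hg := hf.1.update hz
  by_cases hhit : ∃ i, f^[i] z = u
  · exact absurd (hf.ncard_le hg)
      (not_le.2 (ncard_lt_ncard (periodicPts_ssubset_update hu hhit)))
  push Not at hhit
  have hcard : (periodicPts (update f u z)).ncard = (periodicPts f).ncard := by
    rw [periodicPts_update_of_forall_ne hu hhit]
  have hpath : (update f u z)^[L - 1] p = u := iterate_update_of_forall_lt_ne fun i hi he => by
    have := congrArg (level f) he
    rw [level_iterate, level_iterate] at this
    omega
  have hlt : L - 1 < level (update f u z) p := by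
    rw [← not_le, ← iterate_mem_periodicPts_iff, hpath]
    exact notMem_periodicPts_update_self hhit
  have hlevel : level (update f u z) p = L + level f z := by
    have := level_iterate (update f u z) p (L - 1)
    rw [hpath, level_update_self hhit] at this
    omega
  have hroot : root (update f u z) p = root f z := by
    rw [← root_iterate hlt.le, hpath, root_update_of_exists_iterate_eq hhit ⟨0, rfl⟩]
  have hmax := hf.maxLevel_le hg hcard
  have hpg := level_le_maxLevel (update f u z) p
  have hz0 : level f z = 0 := by omega
  -- Both `f` and the update are optimal with `p` deepest, so in both `w` lies `L + 1` steps
  -- before the root of `p`.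
  have hg' := hf.of_le hg hcard (by omega)
  obtain ⟨hw, hfw⟩ := hf.mem_periodicPts_and_iterate_eq_root hbad hp hwp
  obtain ⟨-, hgw⟩ := hg'.mem_periodicPts_and_iterate_eq_root hbad (by omega) hwp
  rw [hlevel, hz0, add_zero, hroot, root, hz0, iterate_zero_apply,
    iterate_update_of_forall_ne (iterate_ne_of_mem_periodicPts_of_notMem hw hu), ← hp,
    hfw] at hgw
  exact hgw.symm

theorem exists_bunches [Nonempty V] {k : ℕ} (hf : IsOptimal E f)
    (hbad : ∀ g, IsSpanning E g → ¬ MaxLevelInOneTree g)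
    (hdeg : ∀ v, Multiset.card (E v) = k)
    (hin : ∀ v, ∃ u, v ∈ E u) (hL : 0 < maxLevel f) :
    ∃ p q r : V, q ≠ r ∧ E q = Multiset.replicate k p ∧ E r = Multiset.replicate k p := by
  obtain ⟨p, hp⟩ := exists_level_eq_maxLevel f
  obtain ⟨w, hwp⟩ := hin p
  obtain ⟨d, hd, hdm⟩ := hf.exists_iterate_root_eq hbad hp hwp
  have hg := hf.1.update hwp
  have hcard := ncard_periodicPts_update_add hd (by omega)
  obtain ⟨hlev, hroot⟩ := level_root_update_iterate_root hd (by omega) (j := d + 1)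
    (by omega) (by omega)
  have hfw : f^[d + 1] (root f p) = f w := by rw [iterate_succ_apply', hd]
  rw [hfw] at hlev hroot
  have hmax := hf.maxLevel_le hg (by omega)
  have hwg := level_le_maxLevel (update f w p) (f w)
  have hg' := hf.of_le hg (by omega) (by omega)
  obtain ⟨w', hw'⟩ := hin (f w)
  -- In the optimal subgraph `update f w p`, the deepest vertex `f w` plays the role of `p`.
  have hpath : (update f w p)^[maxLevel (update f w p) - 1] (f w) = f^[maxLevel f] w := by
    rw [← hfw, iterate_update_iterate_root hd (Nat.lt_succ_self d) (by omega)]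
    conv_rhs => rw [← hd, ← iterate_add_apply]
    congr 1
    omega
  refine ⟨root f p, f^[maxLevel f - 1] p, f^[maxLevel f] w, fun he => ?_,
    Multiset.eq_replicate.2 ⟨hdeg _, fun z hz => hf.eq_root_of_mem hbad hp hL hwp hz⟩,
    Multiset.eq_replicate.2 ⟨hdeg _, fun z hz => ?_⟩⟩
  · have hw := (hf.mem_periodicPts_and_iterate_eq_root hbad hp hwp).1
    have := iterate_mem_periodicPts_iff.1 (he ▸ iterate_mem_periodicPts hw (maxLevel f))
    omega
  · rw [← hpath] at hz
    rw [← hroot]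
    exact hg'.eq_root_of_mem hbad (by omega) (by omega) hw' hz

end IsOptimal

end Optimal

theorem maxLevelInOneTree_update_of_forall_mem_periodicPts {V : Type} [Fintype V]
    [DecidableEq V] {f : V → V} (hall : ∀ v, v ∈ periodicPts f) {a b : V} (hb : b ≠ f a) :
    MaxLevelInOneTree (update f a b) := by
  have hlevel : ∀ x, level f x = 0 := fun x => level_eq_zero_iff.2 (hall x)
  have hmax : ∀ x, level f x ≤ level f b := fun x => (hlevel x).trans_le (Nat.zero_le _)
  by_cases hhit : ∃ i, f^[i] b = a
  · obtain ⟨i, hi⟩ := hhit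
    obtain ⟨d, hdm, hd⟩ := exists_lt_minimalPeriod_iterate_root_eq (hall a) hi
    have hrb : root f b = b := by rw [root, hlevel, iterate_zero_apply]
    refine maxLevelInOneTree_update_of_iterate_root_eq hmax hd ?_
    rw [hlevel, zero_add]
    refine (Nat.succ_le_of_lt hdm).lt_of_ne fun h => hb ?_
    rw [← hd, ← iterate_succ_apply' f d, h, iterate_minimalPeriod, hrb]
  · push Not at hhit
    exact maxLevelInOneTree_update_of_forall_ne hmax (hall a) hhit

theorem IsCycle.exists_isPeriodicPt_length {V : Type} {E : V → Multiset V} {f : V → V}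
    (hE : ∀ a, ∀ b ∈ E a, b = f a) {l : List V} (hl : IsCycle E l) :
    ∃ x, IsPeriodicPt f l.length x := by
  obtain ⟨hne, -, hchain, hlast⟩ := hl
  have hc : l.IsChain (fun x y => f x = y) := hchain.imp fun a b h => (hE a b h).symm
  have hlen : 0 < l.length := List.length_pos_iff.2 hne
  refine ⟨l[0], ?_⟩
  have := hc.iterate_eq_of_apply_eq (l.length - 1) (by omega)
  rw [IsPeriodicPt, IsFixedPt, ← Nat.sub_add_cancel hlen, iterate_succ_apply', this,
    ← List.getLast_eq_getElem, ← hE _ _ hlast, List.head_eq_getElem]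
  exact hne

section AGW

variable {V : Type} [Fintype V] {E : V → Multiset V} {k : ℕ}

theorem IsAGW.exists_mem_ne (hAGW : IsAGW E k) (hV : 1 < Fintype.card V) {f : V → V}
    (hall : ∀ v, v ∈ periodicPts f) : ∃ a, ∃ b ∈ E a, b ≠ f a := by
  -- Otherwise `V` is one `f`-cycle whose length divides the length of every cycle of `E`.
  by_contra! hE
  obtain ⟨-, hconn, hgcd⟩ := hAGW
  have hreach : ∀ u v, ∃ n, f^[n] u = v := fun u v => by
    induction hconn u v with
    | refl => exact ⟨0, rfl⟩
    | tail _ hbc ih =>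
      obtain ⟨n, hn⟩ := ih
      exact ⟨n + 1, by rw [iterate_succ_apply', hn, hE _ _ hbc]⟩
  obtain ⟨v⟩ := Fintype.card_pos_iff.1 (zero_lt_one.trans hV)
  have hper : ∀ x, minimalPeriod f x = minimalPeriod f v := fun x => by
    obtain ⟨n, rfl⟩ := hreach v x
    exact minimalPeriod_apply_iterate (hall v) n
  have hfix : IsFixedPt f v := minimalPeriod_eq_one_iff_isFixedPt.1 <| hgcd _ fun l hl => by
    obtain ⟨x, hx⟩ := hl.exists_isPeriodicPt_length hE
    exact hper x ▸ hx.minimalPeriod_dvd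
  obtain ⟨u, hu⟩ := Fintype.exists_ne_of_one_lt_card hV v
  obtain ⟨n, hn⟩ := hreach v u
  exact hu (hn ▸ (hfix.iterate n).eq)

theorem IsAGW.exists_isSpanning (hAGW : IsAGW E k) (hV : 1 < Fintype.card V) :
    ∃ f, IsSpanning E f := by
  have : ∀ v, ∃ u, u ∈ E v := fun v => by
    obtain ⟨u, hu⟩ := Fintype.exists_ne_of_one_lt_card hV v
    rcases (hAGW.2.1 v u).cases_head with h | ⟨c, hc, -⟩
    · exact absurd h hu.symm
    · exact ⟨c, hc⟩
  choose f hf using this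
  exact ⟨f, hf⟩

theorem IsAGW.exists_mem (hAGW : IsAGW E k) (hV : 1 < Fintype.card V) (v : V) :
    ∃ u, v ∈ E u := by
  obtain ⟨u, hu⟩ := Fintype.exists_ne_of_one_lt_card hV v
  rcases (hAGW.2.1 u v).cases_tail with h | ⟨c, -, hc⟩
  · exact absurd h.symm hu
  · exact ⟨c, hc⟩

end AGW

/-- If no vertex of an AGW graph with at least two vertices has two
incoming bunches, then the graph has a spanning subgraph whose maximal level `L` is
positive and all whose vertices of level `L` lie in one tree (have the same root). -/
theorem exists_spanning_max_level_one_tree {V : Type} [Fintype V] [DecidableEq V]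
    [Nonempty V] (E : V → Multiset V) (k : ℕ) (hAGW : IsAGW E k)
    (hV : 1 < Fintype.card V)
    (hnb : ¬ ∃ p q r : V, q ≠ r ∧ E q = Multiset.replicate k p ∧
      E r = Multiset.replicate k p) :
    ∃ f : V → V, IsSpanning E f ∧
      ∃ L : ℕ, 0 < L ∧ (∀ v : V, level f v ≤ L) ∧ (∃ v : V, level f v = L) ∧
        ∀ u v : V, level f u = L → level f v = L → root f u = root f v := by
  by_contra hcon
  have hbad : ∀ g, IsSpanning E g → ¬ MaxLevelInOneTree g := fun g hg hgood =>
    hcon ⟨g, hg, hgood⟩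
  obtain ⟨f, hf⟩ := exists_isOptimal (hAGW.exists_isSpanning hV)
  rcases Nat.eq_zero_or_pos (maxLevel f) with h0 | hL
  · have hall : ∀ v, v ∈ periodicPts f := fun v =>
      level_eq_zero_iff.1 (Nat.le_zero.1 (h0 ▸ level_le_maxLevel f v))
    obtain ⟨a, b, hb, hba⟩ := hAGW.exists_mem_ne hV hall
    exact hbad _ (hf.1.update hb) (maxLevelInOneTree_update_of_forall_mem_periodicPts hall hba)
  · exact hnb (hf.exists_bunches hbad hAGW.1 (hAGW.exists_mem hV) hL)
end
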